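/- Suppose δ_j < 1/2. Then ‖|R_j|^{-1/2} P̂_j‖_2 ≤ ‖|R_j|^{1/2} E P_j‖_2 / (1 − 2δ_j), where |R_j|^{-1/2} = Σ_{k≠j} |λ_k − λ_j|^{1/2} P_k. -/

import Mathlib

open Matrix Finset

noncomputable def opNorm {d : ℕ} (A : Matrix (Fin d) (Fin d) ℝ) : ℝ :=
  ‖Matrix.toEuclideanCLM (𝕜 := ℝ) A‖

noncomputable def hsNorm {d : ℕ} (A : Matrix (Fin d) (Fin d) ℝ) : ℝ :=
  Real.sqrt (Matrix.trace (Aᵀ * A))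

noncomputable def proj {d : ℕ} (u : Fin d → ℝ) : Matrix (Fin d) (Fin d) ℝ :=
  Matrix.vecMulVec u u

/-- `|R_j|^{1/2}` : square root of the absolute value of the reduced resolvent. -/
noncomputable def sqrtAbsRes {d : ℕ} (lam : Fin d → ℝ) (u : Fin d → Fin d → ℝ)
    (j : Fin d) : Matrix (Fin d) (Fin d) ℝ :=
  ∑ k ∈ Finset.univ.filter (fun k => k ≠ j), (Real.sqrt |lam k - lam j|)⁻¹ • proj (u k)

/-- `|R_j|^{-1/2}`. -/
noncomputable def invSqrtAbsRes {d : ℕ} (lam : Fin d → ℝ) (u : Fin d → Fin d → ℝ)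
    (j : Fin d) : Matrix (Fin d) (Fin d) ℝ :=
  ∑ k ∈ Finset.univ.filter (fun k => k ≠ j), Real.sqrt |lam k - lam j| • proj (u k)

/-- the reduced resolvent `R_j`. -/
noncomputable def res {d : ℕ} (lam : Fin d → ℝ) (u : Fin d → Fin d → ℝ)
    (j : Fin d) : Matrix (Fin d) (Fin d) ℝ :=
  ∑ k ∈ Finset.univ.filter (fun k => k ≠ j), (lam k - lam j)⁻¹ • proj (u k)

/-- `δ_j`. -/
noncomputable def delta {d : ℕ} (lam : Fin d → ℝ) (u : Fin d → Fin d → ℝ) (j : Fin d)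
    (gj : ℝ) (E : Matrix (Fin d) (Fin d) ℝ) : ℝ :=
  opNorm ((sqrtAbsRes lam u j + (Real.sqrt gj)⁻¹ • proj (u j)) * E *
    (sqrtAbsRes lam u j + (Real.sqrt gj)⁻¹ • proj (u j)))

/-- `δ'_j`. -/
noncomputable def delta' {d : ℕ} (lam : Fin d → ℝ) (u : Fin d → Fin d → ℝ) (j : Fin d)
    (gj : ℝ) (E : Matrix (Fin d) (Fin d) ℝ) : ℝ :=
  max (opNorm (sqrtAbsRes lam u j * E * sqrtAbsRes lam u j))
    (max ((Real.sqrt gj)⁻¹ * hsNorm (sqrtAbsRes lam u j * E * proj (u j)))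
      (gj⁻¹ * hsNorm (proj (u j) * E * proj (u j))))

/-!
Let `T = |R_j|^{1/2} + g_j^{-1/2} P_j`, so that `δ_j = ‖T E T‖` and
`|⟨v, E v⟩| ≤ δ_j ⟨v, T⁻² v⟩`. Min–max then gives `|λ̂_j - λ_j| ≤ δ_j g_j`, hence
`|λ̂_j - λ_k| ≥ (1 - δ_j) |λ_k - λ_j|` for `k ≠ j`. Projecting `Σ̂ û_j = λ̂_j û_j` onto the `u_k`,
`k ≠ j`, shows that `X = |R_j|^{-1/2} û_j` satisfies `X = B (T E T X + ⟨u_j, û_j⟩ |R_j|^{1/2} E u_j)`,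
where `B` is diagonal in the basis `u` with entries `|λ_k - λ_j| / (λ̂_j - λ_k)` of size at most
`(1 - δ_j)⁻¹`. Taking norms, `(1 - δ_j) ‖X‖ ≤ δ_j ‖X‖ + ‖|R_j|^{1/2} E u_j‖`, and
`‖|R_j|^{-1/2} P̂_j‖_2 = ‖X‖`, `‖|R_j|^{1/2} E P_j‖_2 = ‖|R_j|^{1/2} E u_j‖`.
-/

open WithLp Function

section EuclideanNorm

variable {d : ℕ}

lemma dotProduct_eq_inner (v w : Fin d → ℝ) : v ⬝ᵥ w = inner ℝ (toLp 2 v) (toLp 2 w) := by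
  rw [EuclideanSpace.inner_toLp_toLp, star_trivial, dotProduct_comm]

lemma dotProduct_self_eq_norm_sq (v : Fin d → ℝ) : v ⬝ᵥ v = ‖toLp 2 v‖ ^ 2 := by
  rw [dotProduct_eq_inner, real_inner_self_eq_norm_sq]

lemma norm_toLp_eq_one {v : Fin d → ℝ} (hv : v ⬝ᵥ v = 1) : ‖toLp 2 v‖ = 1 := by
  rwa [dotProduct_self_eq_norm_sq, pow_eq_one_iff_of_nonneg (norm_nonneg _) two_ne_zero] at hv

lemma abs_dotProduct_le (v w : Fin d → ℝ) : |v ⬝ᵥ w| ≤ ‖toLp 2 v‖ * ‖toLp 2 w‖ := by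
  rw [dotProduct_eq_inner]
  exact abs_real_inner_le_norm _ _

lemma norm_mulVec_le_opNorm_mul (A : Matrix (Fin d) (Fin d) ℝ) (v : Fin d → ℝ) :
    ‖toLp 2 (A *ᵥ v)‖ ≤ opNorm A * ‖toLp 2 v‖ := by
  rw [← Matrix.toEuclideanCLM_toLp]
  exact ContinuousLinearMap.le_opNorm _ _

lemma abs_dotProduct_mulVec_le (A : Matrix (Fin d) (Fin d) ℝ) (v w : Fin d → ℝ) :
    |v ⬝ᵥ (A *ᵥ w)| ≤ opNorm A * (‖toLp 2 v‖ * ‖toLp 2 w‖) := by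
  calc |v ⬝ᵥ (A *ᵥ w)| ≤ ‖toLp 2 v‖ * ‖toLp 2 (A *ᵥ w)‖ := abs_dotProduct_le v _
    _ ≤ ‖toLp 2 v‖ * (opNorm A * ‖toLp 2 w‖) := by gcongr; exact norm_mulVec_le_opNorm_mul A w
    _ = opNorm A * (‖toLp 2 v‖ * ‖toLp 2 w‖) := by ring

lemma hsNorm_mul_proj (A : Matrix (Fin d) (Fin d) ℝ) {w : Fin d → ℝ} (hw : w ⬝ᵥ w = 1) :
    hsNorm (A * proj w) = ‖toLp 2 (A *ᵥ w)‖ := by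
  rw [hsNorm, proj, mul_vecMulVec, transpose_vecMulVec, vecMulVec_mul_vecMulVec, trace_vecMulVec,
    dotProduct_smul, hw, smul_eq_mul, mul_one, dotProduct_self_eq_norm_sq,
    Real.sqrt_sq (norm_nonneg _)]

end EuclideanNorm

section DiagonalIn

variable {d : ℕ} {e : Fin d → Fin d → ℝ}

noncomputable def diagonalIn (e : Fin d → Fin d → ℝ) (f : Fin d → ℝ) : Matrix (Fin d) (Fin d) ℝ :=
  ∑ k, f k • proj (e k)

lemma proj_mulVec (w v : Fin d → ℝ) : proj w *ᵥ v = (w ⬝ᵥ v) • w := by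
  rw [proj, vecMulVec_mulVec, op_smul_eq_smul]

lemma diagonalIn_mulVec (f : Fin d → ℝ) (v : Fin d → ℝ) :
    diagonalIn e f *ᵥ v = ∑ k, (f k * (e k ⬝ᵥ v)) • e k := by
  simp only [diagonalIn, sum_mulVec, smul_mulVec, proj_mulVec, smul_smul]

lemma transpose_diagonalIn (f : Fin d → ℝ) : (diagonalIn e f)ᵀ = diagonalIn e f := by
  simp only [diagonalIn, transpose_sum, transpose_smul, proj, transpose_vecMulVec]

lemma dotProduct_diagonalIn_mulVec_eq_sum (f : Fin d → ℝ) (v : Fin d → ℝ) :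
    v ⬝ᵥ (diagonalIn e f *ᵥ v) = ∑ k, f k * (e k ⬝ᵥ v) ^ 2 := by
  rw [diagonalIn_mulVec, dotProduct_sum]
  refine Finset.sum_congr rfl fun k _ => ?_
  rw [dotProduct_smul, smul_eq_mul, dotProduct_comm]
  ring

variable (he : ∀ k l, e k ⬝ᵥ e l = if k = l then 1 else 0)
include he

lemma dotProduct_sum_smul (c : Fin d → ℝ) (l : Fin d) : e l ⬝ᵥ ∑ k, c k • e k = c l := by
  simp [dotProduct_sum, he]

lemma sum_proj_eq_one : ∑ k, proj (e k) = 1 := by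
  have hU : of e * (of e)ᵀ = 1 := by
    ext k l
    simpa [mul_apply, dotProduct, one_apply] using he k l
  have hU' : (of e)ᵀ * of e = 1 := mul_eq_one_comm.mp hU
  ext i p
  simpa [proj, vecMulVec_apply, Matrix.sum_apply, mul_apply] using congrFun (congrFun hU' i) p

lemma sum_dotProduct_smul_eq_self (v : Fin d → ℝ) : ∑ k, (e k ⬝ᵥ v) • e k = v := by
  simpa only [sum_mulVec, proj_mulVec, one_mulVec] using congrArg (· *ᵥ v) (sum_proj_eq_one he)

lemma ext_of_dotProduct {v w : Fin d → ℝ} (h : ∀ k, e k ⬝ᵥ v = e k ⬝ᵥ w) : v = w := by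
  rw [← sum_dotProduct_smul_eq_self he v, ← sum_dotProduct_smul_eq_self he w]
  simp only [h]

lemma dotProduct_self_eq_sum_sq (v : Fin d → ℝ) : v ⬝ᵥ v = ∑ k, (e k ⬝ᵥ v) ^ 2 := by
  conv_lhs => arg 1; rw [← sum_dotProduct_smul_eq_self he v]
  simp only [sum_dotProduct, smul_dotProduct, smul_eq_mul, sq]

lemma dotProduct_diagonalIn_mulVec (f v : Fin d → ℝ) (l : Fin d) :
    e l ⬝ᵥ (diagonalIn e f *ᵥ v) = f l * (e l ⬝ᵥ v) := by
  rw [diagonalIn_mulVec, dotProduct_sum_smul he]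

lemma diagonalIn_mulVec_self (f : Fin d → ℝ) (l : Fin d) :
    diagonalIn e f *ᵥ e l = f l • e l := by
  simp [diagonalIn_mulVec, he]

lemma norm_diagonalIn_mulVec_le {f : Fin d → ℝ} {b : ℝ} (hb : 0 ≤ b) (hf : ∀ k, |f k| ≤ b)
    (v : Fin d → ℝ) : ‖toLp 2 (diagonalIn e f *ᵥ v)‖ ≤ b * ‖toLp 2 v‖ := by
  rw [← sq_le_sq₀ (norm_nonneg _) (by positivity), mul_pow, ← dotProduct_self_eq_norm_sq,
    ← dotProduct_self_eq_norm_sq, dotProduct_self_eq_sum_sq he, dotProduct_self_eq_sum_sq he v,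
    Finset.mul_sum]
  refine Finset.sum_le_sum fun k _ => ?_
  rw [dotProduct_diagonalIn_mulVec he, mul_pow]
  exact mul_le_mul_of_nonneg_right (sq_le_sq' (abs_le.mp (hf k)).1 (abs_le.mp (hf k)).2)
    (sq_nonneg _)

end DiagonalIn

section MinMax

variable {d : ℕ} {e e' : Fin d → Fin d → ℝ}
  (he : ∀ k l, e k ⬝ᵥ e l = if k = l then 1 else 0)
  (he' : ∀ k l, e' k ⬝ᵥ e' l = if k = l then 1 else 0)

include he in
lemma linearIndependent_of_dotProduct_eq_ite : LinearIndependent ℝ e := by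
  rw [Fintype.linearIndependent_iff]
  intro c hc l
  simpa [hc] using (dotProduct_sum_smul he c l).symm

include he in
lemma finrank_span_image_finset (S : Finset (Fin d)) :
    Module.finrank ℝ (Submodule.span ℝ (e '' S)) = S.card := by
  rw [Set.image_eq_range]
  exact (finrank_span_eq_card ((linearIndependent_of_dotProduct_eq_ite he).comp _
    Subtype.val_injective)).trans (Fintype.card_coe S)

include he he' in
lemma exists_ne_zero_mem_span_inf {S T : Finset (Fin d)} (h : d < S.card + T.card) :
    ∃ v ≠ 0, v ∈ Submodule.span ℝ (e '' S) ∧ v ∈ Submodule.span ℝ (e' '' T) := by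
  set V := Submodule.span ℝ (e '' S)
  set W := Submodule.span ℝ (e' '' T)
  have hsup : Module.finrank ℝ ↥(V ⊔ W) ≤ d :=
    (Submodule.finrank_le (V ⊔ W)).trans_eq (Module.finrank_fin_fun ℝ)
  have hinf : 0 < Module.finrank ℝ ↥(V ⊓ W) := by
    have := Submodule.finrank_sup_add_finrank_inf_eq V W
    rw [finrank_span_image_finset he, finrank_span_image_finset he'] at this
    omega
  have : Nontrivial ↥(V ⊓ W) := Module.finrank_pos_iff.mp hinf
  obtain ⟨⟨v, hv⟩, hv0⟩ := exists_ne (0 : ↥(V ⊓ W))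
  exact ⟨v, fun h => hv0 (Subtype.ext h), hv.1, hv.2⟩

include he in
lemma dotProduct_eq_zero_of_mem_span {S : Finset (Fin d)} {v : Fin d → ℝ}
    (hv : v ∈ Submodule.span ℝ (e '' S)) {l : Fin d} (hl : l ∉ S) : e l ⬝ᵥ v = 0 := by
  induction hv using Submodule.span_induction with
  | mem x hx =>
    obtain ⟨k, hk, rfl⟩ := hx
    rw [he, if_neg (ne_of_mem_of_not_mem hk hl).symm]
  | zero => exact dotProduct_zero _
  | add x y _ _ hx hy => rw [dotProduct_add, hx, hy, add_zero]
  | smul c x _ hx => rw [dotProduct_smul, hx, smul_zero]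

include he in
lemma sum_mul_sq_le_of_mem_span {S : Finset (Fin d)} {v : Fin d → ℝ}
    (hv : v ∈ Submodule.span ℝ (e '' S)) {f : Fin d → ℝ} {c : ℝ} (hf : ∀ k ∈ S, f k ≤ c) :
    ∑ k, f k * (e k ⬝ᵥ v) ^ 2 ≤ c * (v ⬝ᵥ v) := by
  rw [dotProduct_self_eq_sum_sq he, Finset.mul_sum]
  refine Finset.sum_le_sum fun k _ => ?_
  by_cases hk : k ∈ S
  · exact mul_le_mul_of_nonneg_right (hf k hk) (sq_nonneg _)
  · simp [dotProduct_eq_zero_of_mem_span he hv hk]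

include he in
lemma le_sum_mul_sq_of_mem_span {S : Finset (Fin d)} {v : Fin d → ℝ}
    (hv : v ∈ Submodule.span ℝ (e '' S)) {f : Fin d → ℝ} {c : ℝ} (hf : ∀ k ∈ S, c ≤ f k) :
    c * (v ⬝ᵥ v) ≤ ∑ k, f k * (e k ⬝ᵥ v) ^ 2 := by
  rw [dotProduct_self_eq_sum_sq he, Finset.mul_sum]
  refine Finset.sum_le_sum fun k _ => ?_
  by_cases hk : k ∈ S
  · exact mul_le_mul_of_nonneg_right (hf k hk) (sq_nonneg _)
  · simp [dotProduct_eq_zero_of_mem_span he hv hk]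

variable {a' : Fin d → ℝ} (ha' : Antitone a') {j : Fin d} {c : ℝ}

include he he' ha' in
lemma le_apply_of_forall_mem_span_Iic
    (h : ∀ v ∈ Submodule.span ℝ (e '' Iic j), c * (v ⬝ᵥ v) ≤ v ⬝ᵥ (diagonalIn e' a' *ᵥ v)) :
    c ≤ a' j := by
  obtain ⟨v, hv0, hvS, hvT⟩ := exists_ne_zero_mem_span_inf he he' (S := Iic j) (T := Ici j)
    (by rw [Fin.card_Iic, Fin.card_Ici]; omega)
  have hpos : 0 < v ⬝ᵥ v := by simpa using dotProduct_self_star_pos_iff.mpr hv0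
  have hle : v ⬝ᵥ (diagonalIn e' a' *ᵥ v) ≤ a' j * (v ⬝ᵥ v) := by
    rw [dotProduct_diagonalIn_mulVec_eq_sum]
    exact sum_mul_sq_le_of_mem_span he' hvT fun k hk => ha' (mem_Ici.mp hk)
  exact le_of_mul_le_mul_right ((h v hvS).trans hle) hpos

include he he' ha' in
lemma apply_le_of_forall_mem_span_Ici
    (h : ∀ v ∈ Submodule.span ℝ (e '' Ici j), v ⬝ᵥ (diagonalIn e' a' *ᵥ v) ≤ c * (v ⬝ᵥ v)) :
    a' j ≤ c := by
  obtain ⟨v, hv0, hvS, hvT⟩ := exists_ne_zero_mem_span_inf he he' (S := Ici j) (T := Iic j)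
    (by rw [Fin.card_Iic, Fin.card_Ici]; omega)
  have hpos : 0 < v ⬝ᵥ v := by simpa using dotProduct_self_star_pos_iff.mpr hv0
  have hge : a' j * (v ⬝ᵥ v) ≤ v ⬝ᵥ (diagonalIn e' a' *ᵥ v) := by
    rw [dotProduct_diagonalIn_mulVec_eq_sum]
    exact le_sum_mul_sq_of_mem_span he' hvT fun k hk => ha' (mem_Iic.mp hk)
  exact le_of_mul_le_mul_right (hge.trans (h v hvS)) hpos

include he he' ha' in
theorem abs_sub_le_of_abs_dotProduct_mulVec_le {a w : Fin d → ℝ} {E : Matrix (Fin d) (Fin d) ℝ}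
    (hdecomp : diagonalIn e a + E = diagonalIn e' a')
    (hE : ∀ v, |v ⬝ᵥ (E *ᵥ v)| ≤ ∑ k, w k * (e k ⬝ᵥ v) ^ 2)
    (hlow : ∀ k ≤ j, a j - w j ≤ a k - w k) (hup : ∀ k, j ≤ k → a k + w k ≤ a j + w j) :
    |a' j - a j| ≤ w j := by
  have hquad : ∀ v, v ⬝ᵥ (diagonalIn e' a' *ᵥ v) = ∑ k, a k * (e k ⬝ᵥ v) ^ 2 + v ⬝ᵥ (E *ᵥ v) :=
    fun v => by rw [← hdecomp, add_mulVec, dotProduct_add, dotProduct_diagonalIn_mulVec_eq_sum]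
  have hlower : a j - w j ≤ a' j := le_apply_of_forall_mem_span_Iic he he' ha' fun v hv => by
    have h := le_sum_mul_sq_of_mem_span he hv (f := a - w) fun k hk => hlow k (mem_Iic.mp hk)
    simp only [Pi.sub_apply, sub_mul, Finset.sum_sub_distrib] at h
    linarith [hquad v, (abs_le.mp (hE v)).1]
  have hupper : a' j ≤ a j + w j := apply_le_of_forall_mem_span_Ici he he' ha' fun v hv => by
    have h := sum_mul_sq_le_of_mem_span he hv (f := a + w) fun k hk => hup k (mem_Ici.mp hk)
    simp only [Pi.add_apply, add_mul, Finset.sum_add_distrib] at h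
    linarith [hquad v, (abs_le.mp (hE v)).2]
  exact abs_sub_le_iff.mpr ⟨by linarith, by linarith⟩

end MinMax

section Perturbation

variable {d : ℕ} {e : Fin d → Fin d → ℝ} (he : ∀ k l, e k ⬝ᵥ e l = if k = l then 1 else 0)
include he

lemma abs_dotProduct_mulVec_le_opNorm_conj {s : Fin d → ℝ} (hs : ∀ k, s k ≠ 0)
    (E : Matrix (Fin d) (Fin d) ℝ) (v : Fin d → ℝ) :
    |v ⬝ᵥ (E *ᵥ v)| ≤
      opNorm (diagonalIn e s⁻¹ * E * diagonalIn e s⁻¹) * ∑ k, (s k * (e k ⬝ᵥ v)) ^ 2 := by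
  set T := diagonalIn e s⁻¹
  set z := diagonalIn e s *ᵥ v
  have hTz : T *ᵥ z = v := ext_of_dotProduct he fun k => by
    rw [dotProduct_diagonalIn_mulVec he, dotProduct_diagonalIn_mulVec he, Pi.inv_apply,
      inv_mul_cancel_left₀ (hs k)]
  have hzz : z ⬝ᵥ z = ∑ k, (s k * (e k ⬝ᵥ v)) ^ 2 := by
    simp only [dotProduct_self_eq_sum_sq he z, z, dotProduct_diagonalIn_mulVec he]
  calc |v ⬝ᵥ (E *ᵥ v)| = |z ⬝ᵥ ((T * E * T) *ᵥ z)| := by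
        rw [← mulVec_mulVec, ← mulVec_mulVec, hTz, dotProduct_mulVec z T, ← mulVec_transpose,
          transpose_diagonalIn, hTz]
    _ ≤ opNorm (T * E * T) * (‖toLp 2 z‖ * ‖toLp 2 z‖) := abs_dotProduct_mulVec_le _ _ _
    _ = opNorm (T * E * T) * ∑ k, (s k * (e k ⬝ᵥ v)) ^ 2 := by
        rw [← sq, ← dotProduct_self_eq_norm_sq, hzz]

lemma mulVec_eq_of_mulVec_eq_smul {a s : Fin d → ℝ} (hs : ∀ k, s k ≠ 0)
    {E : Matrix (Fin d) (Fin d) ℝ} {μ : ℝ} {v : Fin d → ℝ}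
    (hv : (diagonalIn e a + E) *ᵥ v = μ • v) {j : Fin d} (hμ : ∀ k ≠ j, μ ≠ a k) :
    diagonalIn e (update s j 0) *ᵥ v =
      diagonalIn e (update (fun k => s k ^ 2 / (μ - a k)) j 0) *ᵥ
        ((diagonalIn e s⁻¹ * E * diagonalIn e s⁻¹) *ᵥ (diagonalIn e (update s j 0) *ᵥ v) +
          (e j ⬝ᵥ v) • (diagonalIn e (update s⁻¹ j 0) *ᵥ (E *ᵥ e j))) := by
  have hEv : ∀ k, e k ⬝ᵥ (E *ᵥ v) = (μ - a k) * (e k ⬝ᵥ v) := fun k => by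
    have h := congrArg (e k ⬝ᵥ ·) hv
    simp only [add_mulVec, dotProduct_add, dotProduct_diagonalIn_mulVec he, dotProduct_smul,
      smul_eq_mul] at h
    linarith
  have hTX : diagonalIn e s⁻¹ *ᵥ (diagonalIn e (update s j 0) *ᵥ v) = v - (e j ⬝ᵥ v) • e j :=
    ext_of_dotProduct he fun l => by
      rw [dotProduct_diagonalIn_mulVec he, dotProduct_diagonalIn_mulVec he, dotProduct_sub,
        dotProduct_smul, he]
      rcases eq_or_ne l j with rfl | hl
      · simp
      · simp [hl, hs l]
  refine ext_of_dotProduct he fun k => ?_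
  rw [dotProduct_diagonalIn_mulVec he, dotProduct_diagonalIn_mulVec he]
  rcases eq_or_ne k j with rfl | hk
  · simp
  rw [update_of_ne hk, update_of_ne hk, dotProduct_add, dotProduct_smul,
    dotProduct_diagonalIn_mulVec he, update_of_ne hk, ← mulVec_mulVec, ← mulVec_mulVec,
    dotProduct_diagonalIn_mulVec he, hTX, mulVec_sub, mulVec_smul, dotProduct_sub,
    dotProduct_smul, hEv, Pi.inv_apply, smul_eq_mul, smul_eq_mul]
  have hμk : μ - a k ≠ 0 := sub_ne_zero.mpr (hμ k hk)
  field_simp [hs k, hμk]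
  ring

theorem norm_mulVec_le_of_mulVec_eq_smul {a s : Fin d → ℝ} (hs : ∀ k, 0 < s k)
    {E : Matrix (Fin d) (Fin d) ℝ} {μ : ℝ} {v : Fin d → ℝ}
    (hv : (diagonalIn e a + E) *ᵥ v = μ • v) (hv1 : v ⬝ᵥ v = 1) {j : Fin d} {δ : ℝ}
    (hδE : opNorm (diagonalIn e s⁻¹ * E * diagonalIn e s⁻¹) ≤ δ) (hδ : δ < 1 / 2)
    (hgap : ∀ k ≠ j, (1 - δ) * s k ^ 2 ≤ |μ - a k|) :
    ‖toLp 2 (diagonalIn e (update s j 0) *ᵥ v)‖ ≤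
      ‖toLp 2 (diagonalIn e (update s⁻¹ j 0) *ᵥ (E *ᵥ e j))‖ / (1 - 2 * δ) := by
  set F := diagonalIn e s⁻¹ * E * diagonalIn e s⁻¹
  set X := diagonalIn e (update s j 0) *ᵥ v
  set Z := diagonalIn e (update s⁻¹ j 0) *ᵥ (E *ᵥ e j)
  have hδ0 : 0 ≤ δ := (norm_nonneg _).trans hδE
  have hgap_pos : ∀ k ≠ j, 0 < |μ - a k| := fun k hk =>
    lt_of_lt_of_le (mul_pos (by linarith) (pow_pos (hs k) 2)) (hgap k hk)
  have hβ : ∀ k, |update (fun k => s k ^ 2 / (μ - a k)) j 0 k| ≤ (1 - δ)⁻¹ := fun k => by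
    rcases eq_or_ne k j with rfl | hk
    · simpa using inv_nonneg.mpr (by linarith : 0 ≤ 1 - δ)
    rw [update_of_ne hk, abs_div, abs_of_nonneg (sq_nonneg _), div_le_iff₀ (hgap_pos k hk),
      le_inv_mul_iff₀ (by linarith)]
    exact hgap k hk
  have hxj : |e j ⬝ᵥ v| ≤ 1 := by
    simpa [norm_toLp_eq_one hv1, norm_toLp_eq_one (by simpa using he j j)]
      using abs_dotProduct_le (e j) v
  have hX : ‖toLp 2 X‖ ≤ (1 - δ)⁻¹ * (δ * ‖toLp 2 X‖ + ‖toLp 2 Z‖) := by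
    calc ‖toLp 2 X‖
        = ‖toLp 2 (diagonalIn e (update (fun k => s k ^ 2 / (μ - a k)) j 0) *ᵥ
            (F *ᵥ X + (e j ⬝ᵥ v) • Z))‖ := by
          rw [← mulVec_eq_of_mulVec_eq_smul he (fun k => (hs k).ne') hv
            fun k hk => sub_ne_zero.mp (abs_pos.mp (hgap_pos k hk))]
      _ ≤ (1 - δ)⁻¹ * ‖toLp 2 (F *ᵥ X + (e j ⬝ᵥ v) • Z)‖ :=
          norm_diagonalIn_mulVec_le he (inv_nonneg.mpr (by linarith)) hβ _
      _ ≤ (1 - δ)⁻¹ * (δ * ‖toLp 2 X‖ + ‖toLp 2 Z‖) := by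
          refine mul_le_mul_of_nonneg_left ?_ (inv_nonneg.mpr (by linarith))
          rw [toLp_add, toLp_smul]
          refine (norm_add_le _ _).trans (add_le_add ?_ ?_)
          · exact (norm_mulVec_le_opNorm_mul F X).trans (by gcongr)
          · rw [norm_smul, Real.norm_eq_abs]
            exact mul_le_of_le_one_left (norm_nonneg _) hxj
  have h := (le_inv_mul_iff₀ (by linarith : 0 < 1 - δ)).mp hX
  rw [le_div_iff₀ (by linarith)]
  linarith

end Perturbation

section ReducedResolvent

variable {d : ℕ}

lemma diagonalIn_update (e : Fin d → Fin d → ℝ) (f : Fin d → ℝ) (j : Fin d) (c : ℝ) :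
    diagonalIn e (update f j c) =
      ∑ k ∈ Finset.univ.filter (fun k => k ≠ j), f k • proj (e k) + c • proj (e j) := by
  rw [diagonalIn, ← Finset.sum_filter_add_sum_filter_not Finset.univ (fun k => k ≠ j)]
  congr 1
  · exact Finset.sum_congr rfl fun k hk => by rw [update_of_ne (mem_filter.mp hk).2]
  · simp [Finset.filter_eq']

noncomputable def sqrtGap (lam : Fin d → ℝ) (j : Fin d) (g : ℝ) : Fin d → ℝ :=
  update (fun k => √|lam k - lam j|) j (√g)

variable {lam : Fin d → ℝ} {j : Fin d} {g : ℝ}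

lemma sq_sqrtGap_self (hg : 0 ≤ g) : sqrtGap lam j g j ^ 2 = g := by
  rw [sqrtGap, update_self, Real.sq_sqrt hg]

lemma sq_sqrtGap_of_ne {k : Fin d} (hk : k ≠ j) : sqrtGap lam j g k ^ 2 = |lam k - lam j| := by
  rw [sqrtGap, update_of_ne hk, Real.sq_sqrt (abs_nonneg _)]

lemma sqrtGap_pos (hg : 0 < g) (hgap : ∀ k ≠ j, g ≤ |lam k - lam j|) (k : Fin d) :
    0 < sqrtGap lam j g k := by
  rcases eq_or_ne k j with rfl | hk
  · rw [sqrtGap, update_self]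
    exact Real.sqrt_pos.mpr hg
  · rw [sqrtGap, update_of_ne hk]
    exact Real.sqrt_pos.mpr (hg.trans_le (hgap k hk))

variable (u : Fin d → Fin d → ℝ)

lemma sqrtAbsRes_eq_diagonalIn :
    sqrtAbsRes lam u j = diagonalIn u (update (sqrtGap lam j g)⁻¹ j 0) := by
  rw [diagonalIn_update, zero_smul, add_zero, sqrtAbsRes]
  exact Finset.sum_congr rfl fun k hk => by
    rw [Pi.inv_apply, sqrtGap, update_of_ne (mem_filter.mp hk).2]

lemma invSqrtAbsRes_eq_diagonalIn :
    invSqrtAbsRes lam u j = diagonalIn u (update (sqrtGap lam j g) j 0) := by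
  rw [diagonalIn_update, zero_smul, add_zero, invSqrtAbsRes]
  exact Finset.sum_congr rfl fun k hk => by rw [sqrtGap, update_of_ne (mem_filter.mp hk).2]

lemma delta_eq_opNorm (E : Matrix (Fin d) (Fin d) ℝ) :
    delta lam u j g E =
      opNorm (diagonalIn u (sqrtGap lam j g)⁻¹ * E * diagonalIn u (sqrtGap lam j g)⁻¹) := by
  have hT : sqrtAbsRes lam u j + (√g)⁻¹ • proj (u j) = diagonalIn u (sqrtGap lam j g)⁻¹ := by
    rw [← update_eq_self j (sqrtGap lam j g)⁻¹, diagonalIn_update, sqrtAbsRes_eq_diagonalIn,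
      diagonalIn_update, zero_smul, add_zero, Pi.inv_apply, sqrtGap, update_self]
  rw [delta, hT]

end ReducedResolvent

theorem abs_sub_le_delta_mul {d : ℕ} {lam lamh : Fin d → ℝ} {u uh : Fin d → Fin d → ℝ}
    (hON : ∀ k l, u k ⬝ᵥ u l = if k = l then (1 : ℝ) else 0) (hlam : Antitone lam)
    (hONh : ∀ k l, uh k ⬝ᵥ uh l = if k = l then (1 : ℝ) else 0) (hlamh : Antitone lamh)
    {E : Matrix (Fin d) (Fin d) ℝ} (hdecomp : diagonalIn u lam + E = diagonalIn uh lamh)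
    {j : Fin d} {g : ℝ} (hg : 0 ≤ g) (hs : ∀ k, 0 < sqrtGap lam j g k)
    (hδ : delta lam u j g E ≤ 1) :
    |lamh j - lam j| ≤ delta lam u j g E * g := by
  set δ := delta lam u j g E
  have hδ0 : 0 ≤ δ := norm_nonneg _
  have hE : ∀ v, |v ⬝ᵥ (E *ᵥ v)| ≤ ∑ k, δ * sqrtGap lam j g k ^ 2 * (u k ⬝ᵥ v) ^ 2 := fun v => by
    refine (abs_dotProduct_mulVec_le_opNorm_conj hON (fun k => (hs k).ne') E v).trans_eq ?_
    rw [← delta_eq_opNorm, Finset.mul_sum]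
    exact Finset.sum_congr rfl fun k _ => by ring
  have h := abs_sub_le_of_abs_dotProduct_mulVec_le hON hONh hlamh hdecomp hE
    (fun k hk => by
      rcases eq_or_ne k j with rfl | hne
      · rfl
      rw [sq_sqrtGap_self hg, sq_sqrtGap_of_ne hne, abs_of_nonneg (sub_nonneg.mpr (hlam hk))]
      linarith [mul_nonneg (sub_nonneg.mpr hδ) (sub_nonneg.mpr (hlam hk)), mul_nonneg hδ0 hg])
    (fun k hk => by
      rcases eq_or_ne k j with rfl | hne
      · rfl
      rw [sq_sqrtGap_self hg, sq_sqrtGap_of_ne hne, abs_of_nonpos (sub_nonpos.mpr (hlam hk))]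
      linarith [mul_nonneg (sub_nonneg.mpr hδ) (sub_nonneg.mpr (hlam hk)), mul_nonneg hδ0 hg])
  rwa [sq_sqrtGap_self hg] at h

theorem stmt6_general {d : ℕ} (lam : Fin d → ℝ) (u : Fin d → Fin d → ℝ)
    (hON : ∀ k l, u k ⬝ᵥ u l = if k = l then (1 : ℝ) else 0)
    (hlam : Antitone lam)
    (E : Matrix (Fin d) (Fin d) ℝ)
    (j : Fin d) (gj : ℝ) (hgj_pos : 0 < gj)
    (hgj : IsLeast {x : ℝ | ∃ k, k ≠ j ∧ x = |lam k - lam j|} gj)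
    (lamh : Fin d → ℝ) (uh : Fin d → Fin d → ℝ)
    (hONh : ∀ k l, uh k ⬝ᵥ uh l = if k = l then (1 : ℝ) else 0)
    (hlamh : Antitone lamh)
    (hdecomp : (∑ k, lam k • proj (u k)) + E = ∑ k, lamh k • proj (uh k))
    (hdelta : delta lam u j gj E < 1 / 2) :
    hsNorm (invSqrtAbsRes lam u j * proj (uh j)) ≤
      hsNorm (sqrtAbsRes lam u j * E * proj (u j)) / (1 - 2 * delta lam u j gj E) := by
  set δ := delta lam u j gj E
  have hδ0 : 0 ≤ δ := norm_nonneg _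
  have hmin : ∀ k ≠ j, gj ≤ |lam k - lam j| := fun k hk => hgj.2 ⟨k, hk, rfl⟩
  have hs := sqrtGap_pos hgj_pos hmin
  have hweyl : |lamh j - lam j| ≤ δ * gj :=
    abs_sub_le_delta_mul hON hlam hONh hlamh hdecomp hgj_pos.le hs (by linarith)
  have hgap : ∀ k ≠ j, (1 - δ) * sqrtGap lam j gj k ^ 2 ≤ |lamh j - lam k| := fun k hk => by
    have htri := abs_sub_le (lam k) (lamh j) (lam j)
    rw [abs_sub_comm (lam k) (lamh j)] at htri
    rw [sq_sqrtGap_of_ne hk]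
    linarith [mul_le_mul_of_nonneg_left (hmin k hk) hδ0]
  have hunit : uh j ⬝ᵥ uh j = 1 := by simpa using hONh j j
  have heig : (diagonalIn u lam + E) *ᵥ uh j = lamh j • uh j := by
    rw [diagonalIn, hdecomp, ← diagonalIn, diagonalIn_mulVec_self hONh]
  rw [hsNorm_mul_proj _ hunit, hsNorm_mul_proj _ (by simpa using hON j j),
    invSqrtAbsRes_eq_diagonalIn (g := gj), sqrtAbsRes_eq_diagonalIn (g := gj), ← mulVec_mulVec]
  exact norm_mulVec_le_of_mulVec_eq_smul hON hs heig hunit (delta_eq_opNorm u E).ge hdelta hgap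

theorem stmt6 {d : ℕ} (lam : Fin d → ℝ) (u : Fin d → Fin d → ℝ)
    (hON : ∀ k l, u k ⬝ᵥ u l = if k = l then (1 : ℝ) else 0)
    (hlam : Antitone lam)
    (E : Matrix (Fin d) (Fin d) ℝ) (hE : E.IsSymm)
    (j : Fin d) (gj : ℝ) (hgj_pos : 0 < gj)
    (hgj : IsLeast {x : ℝ | ∃ k, k ≠ j ∧ x = |lam k - lam j|} gj)
    (lamh : Fin d → ℝ) (uh : Fin d → Fin d → ℝ)
    (hONh : ∀ k l, uh k ⬝ᵥ uh l = if k = l then (1 : ℝ) else 0)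
    (hlamh : Antitone lamh)
    (hdecomp : (∑ k, lam k • proj (u k)) + E = ∑ k, lamh k • proj (uh k))
    (hdelta : delta lam u j gj E < 1 / 2) :
    hsNorm (invSqrtAbsRes lam u j * proj (uh j)) ≤
      hsNorm (sqrtAbsRes lam u j * E * proj (u j)) / (1 - 2 * delta lam u j gj E) :=
  stmt6_general lam u hON hlam E j gj hgj_pos hgj lamh uh hONh hlamh hdecomp hdelta
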